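/- arXiv:2510.07561 — 3 statements merged into one kernel-verified Lean document; each statement's English description precedes it below -/
import Mathlib

section
/- Let {K_r}_{r=1}^R be a finite family of D×D complex matrices whose linear span is all of M_D(ℂ), and define Ψ(X) = Σ_r K_r X K_r†. Then Ψ is strictly positive: for every nonzero positive semidefinite X ∈ M_D(ℂ), the matrix Ψ(X) is positive definite. -/
open Matrix ComplexOrder in
theorem stmt_0 {D R : ℕ} (K : Fin R → Matrix (Fin D) (Fin D) ℂ)
    (hspan : Submodule.span ℂ (Set.range K) = ⊤)
    (X : Matrix (Fin D) (Fin D) ℂ) (hX : X.PosSemidef) (hX0 : X ≠ 0) :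
    (∑ r, K r * X * (K r)ᴴ).PosDef := by
  have hsum : (∑ r, K r * X * (K r)ᴴ).PosSemidef := by
    exact Finset.sum_induction (fun r => K r * X * (K r)ᴴ) (fun M => M.PosSemidef)
      (fun a b ha hb => ha.add hb) Matrix.PosSemidef.zero
      (fun r _ => hX.mul_mul_conjTranspose_same (K r))
  refine Matrix.posDef_iff_dotProduct_mulVec.mpr ⟨hsum.isHermitian, fun v hv => ?_⟩
  refine lt_of_le_of_ne (hsum.dotProduct_mulVec_nonneg v) (Ne.symm fun h0 => ?_)
  -- each term is zero
  have hterm : ∀ r, star v ⬝ᵥ (K r * X * (K r)ᴴ) *ᵥ v = 0 := by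
    have hsplit : ∀ s : Finset (Fin R), star v ⬝ᵥ (∑ r ∈ s, K r * X * (K r)ᴴ) *ᵥ v
        = ∑ r ∈ s, star v ⬝ᵥ (K r * X * (K r)ᴴ) *ᵥ v := by
      intro s
      induction s using Finset.induction_on with
      | empty => simp
      | insert _ _ h ih =>
          rw [Finset.sum_insert h, Finset.sum_insert h, Matrix.add_mulVec,
            dotProduct_add, ih]
    have hsplit := hsplit Finset.univ
    rw [hsplit] at h0
    intro r
    exact (Finset.sum_eq_zero_iff_of_nonneg (fun r _ =>
      (hX.mul_mul_conjTranspose_same (K r)).dotProduct_mulVec_nonneg v)).mp h0 r (Finset.mem_univ r)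
  -- translate: X *ᵥ ((K r)ᴴ *ᵥ v) = 0
  have hXKv : ∀ r, (X * (K r)ᴴ) *ᵥ v = 0 := by
    intro r
    have key : star ((K r)ᴴ *ᵥ v) ⬝ᵥ X *ᵥ ((K r)ᴴ *ᵥ v) = 0 := by
      have := hterm r
      rw [mul_assoc, ← Matrix.mulVec_mulVec, Matrix.dotProduct_mulVec] at this
      rw [Matrix.star_mulVec, Matrix.conjTranspose_conjTranspose, Matrix.mulVec_mulVec]
      exact this
    have := (hX.dotProduct_mulVec_zero_iff _).mp key
    rw [← Matrix.mulVec_mulVec]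
    exact this
  -- extend to all matrices
  have hall : ∀ A : Matrix (Fin D) (Fin D) ℂ, (X * Aᴴ) *ᵥ v = 0 := by
    intro A
    have hA : A ∈ Submodule.span ℂ (Set.range K) := hspan ▸ Submodule.mem_top
    induction hA using Submodule.span_induction with
    | mem x hx => obtain ⟨r, rfl⟩ := hx; exact hXKv r
    | zero => simp
    | add x y _ _ hx hy =>
        rw [conjTranspose_add, Matrix.mul_add, Matrix.add_mulVec, hx, hy, add_zero]
    | smul c x _ hx =>
        rw [conjTranspose_smul, Matrix.mul_smul, Matrix.smul_mulVec, hx, smul_zero]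
  -- derive contradiction: X ≠ 0 gives u with X *ᵥ u ≠ 0
  have hu : ∃ u, X *ᵥ u ≠ 0 := by
    by_contra h
    push_neg at h
    apply hX0
    ext i j
    have := congrFun (h (Pi.single j 1)) i
    simpa [Matrix.mulVec_single] using this
  obtain ⟨u, hu⟩ := hu
  have := hall (Matrix.vecMulVec u (star v))ᴴ
  rw [conjTranspose_conjTranspose] at this
  rw [← Matrix.mulVec_mulVec] at this
  rw [show Matrix.vecMulVec u (star v) *ᵥ v = (star v ⬝ᵥ v) • u by
    ext i; simp [Matrix.vecMulVec, Matrix.mulVec, dotProduct, Finset.mul_sum, mul_comm, mul_left_comm]] at this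
  rw [Matrix.mulVec_smul] at this
  have hvv : star v ⬝ᵥ v ≠ 0 := fun h => hv (dotProduct_star_self_eq_zero.mp h)
  exact hu (smul_eq_zero.mp this |>.resolve_left hvv)
end

section
/- Let (c_n)_{n≥1} be a sequence with values in [0,1] satisfying the recursive bound c(i+q+r) ≤ c(i)·c(r) + ρ_q·√(c(i)·c(r)) for all i,q,r ∈ ℕ, where ρ_q ∈ [0,1]. Suppose there exists N₀ with ρ_{N₀} + c(N₀) ≤ 4^{-p} for a given p ∈ ℕ. Then for M_k := (2^k − 1)N₀ one has c(M_k) ≤ 4^{-(k-1)p}·c(N₀) for all k ≥ 1. -/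
/-!
Put `a k := c ((2 ^ (k + 1) - 1) * N₀)`. Since `(2 ^ (k + 2) - 1) * N₀ = M + N₀ + M` with
`M = (2 ^ (k + 1) - 1) * N₀`, the recursive bound with `i = r = M`, `q = N₀` gives
`a (k + 1) ≤ (a k + ρ N₀) * a k`. As long as `a k ≤ a 0 = c N₀`, the first factor is at most
`ρ N₀ + c N₀ ≤ 4⁻¹ ^ p`, so each doubling step gains a factor `4⁻¹ ^ p`.
-/

theorem le_pow_mul_of_le_add_mul {a : ℕ → ℝ} {r ε : ℝ} (ha : ∀ k, 0 ≤ a k)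
    (hstep : ∀ k, a (k + 1) ≤ (a k + r) * a k) (hε₀ : 0 ≤ ε) (hε₁ : ε ≤ 1)
    (hsmall : r + a 0 ≤ ε) : ∀ k, a k ≤ ε ^ k * a 0 := by
  intro k
  induction k with
  | zero => simp
  | succ k ih =>
    have hak : a k ≤ a 0 :=
      ih.trans (mul_le_of_le_one_left (ha 0) (pow_le_one₀ hε₀ hε₁))
    calc a (k + 1) ≤ (a k + r) * a k := hstep k
      _ ≤ ε * (ε ^ k * a 0) := mul_le_mul (by linarith) ih (ha k) hε₀
      _ = ε ^ (k + 1) * a 0 := by ring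

theorem two_pow_succ_sub_one_mul (k N : ℕ) :
    (2 ^ (k + 1) - 1) * N = (2 ^ k - 1) * N + N + (2 ^ k - 1) * N := by
  have h : 2 ^ (k + 1) - 1 = (2 ^ k - 1) + 1 + (2 ^ k - 1) := by
    have := Nat.one_le_two_pow (n := k)
    rw [pow_succ]
    omega
  rw [h]
  ring

theorem le_add_mul_of_le_mul_add_mul_sqrt {c ρ : ℕ → ℝ} (hc₀ : ∀ n, 0 ≤ c n)
    (hrec : ∀ i q r : ℕ, 1 ≤ i → 1 ≤ q → 1 ≤ r →
      c (i + q + r) ≤ c i * c r + ρ q * Real.sqrt (c i * c r))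
    {M N : ℕ} (hM : 1 ≤ M) (hN : 1 ≤ N) :
    c (M + N + M) ≤ (c M + ρ N) * c M := by
  have h := hrec M N M hM hN hM
  rw [Real.sqrt_mul_self (hc₀ M)] at h
  linarith

theorem stmt_6_general (c ρ : ℕ → ℝ)
    (hc0 : ∀ n, 0 ≤ c n)
    (hrec : ∀ i q r : ℕ, 1 ≤ i → 1 ≤ q → 1 ≤ r →
      c (i + q + r) ≤ c i * c r + ρ q * Real.sqrt (c i * c r))
    (p N₀ : ℕ) (hN₀ : 1 ≤ N₀)
    (hsmall : ρ N₀ + c N₀ ≤ ((4 : ℝ))⁻¹ ^ p) :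
    ∀ k : ℕ, 1 ≤ k → c ((2 ^ k - 1) * N₀) ≤ ((4 : ℝ))⁻¹ ^ ((k - 1) * p) * c N₀ := by
  have hstep : ∀ k, c ((2 ^ (k + 1 + 1) - 1) * N₀) ≤
      (c ((2 ^ (k + 1) - 1) * N₀) + ρ N₀) * c ((2 ^ (k + 1) - 1) * N₀) := fun k => by
    have hM : 1 ≤ (2 ^ (k + 1) - 1) * N₀ :=
      Nat.one_le_iff_ne_zero.mpr (Nat.mul_ne_zero (by simp [Nat.sub_eq_zero_iff_le]) (by omega))
    rw [two_pow_succ_sub_one_mul]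
    exact le_add_mul_of_le_mul_add_mul_sqrt hc0 hrec hM hN₀
  have hdecay := le_pow_mul_of_le_add_mul (a := fun k => c ((2 ^ (k + 1) - 1) * N₀))
    (ε := (4 : ℝ)⁻¹ ^ p) (fun k => hc0 _) hstep (by positivity)
    (pow_le_one₀ (by norm_num) (by norm_num)) (by simpa using hsmall)
  rintro k hk
  obtain ⟨j, rfl⟩ := Nat.exists_eq_add_of_le' hk
  simpa [← pow_mul, mul_comm p] using hdecay j

theorem stmt_6 (c ρ : ℕ → ℝ)
    (hc0 : ∀ n, 0 ≤ c n) (hc1 : ∀ n, c n ≤ 1)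
    (hρ0 : ∀ n, 0 ≤ ρ n) (hρ1 : ∀ n, ρ n ≤ 1)
    (hrec : ∀ i q r : ℕ, 1 ≤ i → 1 ≤ q → 1 ≤ r →
      c (i + q + r) ≤ c i * c r + ρ q * Real.sqrt (c i * c r))
    (p N₀ : ℕ) (hN₀ : 1 ≤ N₀)
    (hsmall : ρ N₀ + c N₀ ≤ ((4 : ℝ))⁻¹ ^ p) :
    ∀ k : ℕ, 1 ≤ k → c ((2 ^ k - 1) * N₀) ≤ ((4 : ℝ))⁻¹ ^ ((k - 1) * p) * c N₀ :=
  stmt_6_general c ρ hc0 hrec p N₀ hN₀ hsmall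
end

section
/- Let (X_{m,n})_{m<n} be a family of random variables with values in [−∞, 0] that is subadditive, X_{p,r} ≤ X_{p,q} + X_{q,r} for p < q < r, and stationary under the shift (m,n) ↦ (m+1,n+1). Let ξ = lim_{n→∞} X_{0,n}/n (which exists a.s. by Kingman's subadditive ergodic theorem, with values in [−∞,0]). If ℙ(⋂_{n∈ℕ} {X_{0,n} = 0}) = 0, then ξ < 0 almost surely. -/
open MeasureTheory Filter

lemma ereal_measurable_add {α} [MeasurableSpace α] {f g : α → EReal}
    (hf : Measurable f) (hg : Measurable g) : Measurable (fun x => f x + g x) := by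
  have hrep : ∀ x y : EReal, x + y = if x = ⊥ then ⊥ else if y = ⊥ then ⊥ else
      if x = ⊤ then ⊤ else if y = ⊤ then ⊤ else ((x.toReal + y.toReal : ℝ) : EReal) := by
    intro x y
    induction x using EReal.rec <;> induction y using EReal.rec <;>
      simp [EReal.bot_add, EReal.add_bot, EReal.top_add_top, EReal.top_add_coe,
        EReal.coe_add_top, ← EReal.coe_add]
  simp only [hrep]
  refine Measurable.ite (hf (measurableSet_singleton ⊥)) measurable_const ?_
  refine Measurable.ite (hg (measurableSet_singleton ⊥)) measurable_const ?_
  refine Measurable.ite (hf (measurableSet_singleton ⊤)) measurable_const ?_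
  refine Measurable.ite (hg (measurableSet_singleton ⊤)) measurable_const ?_
  exact (hf.ereal_toReal.add hg.ereal_toReal).coe_real_ereal

lemma ereal_measurable_le {α} [MeasurableSpace α] {f g : α → EReal}
    (hf : Measurable f) (hg : Measurable g) : MeasurableSet {x | f x ≤ g x} :=
  measurableSet_le hf hg

lemma ereal_measurable_div_const (d : ℝ) (hd : 0 ≤ d) :
    Measurable (fun x : EReal => x / (d : EReal)) :=
  Monotone.measurable (fun _ _ hab => EReal.div_le_div_right_of_nonneg (by exact_mod_cast hd) hab)

lemma aux_tendsto_zero {r : ℕ → ℝ} (hr : ∀ k, r k ≤ 0)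
    (h : 0 ≤ atTop.liminf (fun k => ((r k : ℝ) : EReal))) : Tendsto r atTop (nhds 0) := by
  have h1 : atTop.limsup (fun k => ((r k : ℝ) : EReal)) ≤ 0 :=
    limsup_le_of_le (by isBoundedDefault) (Eventually.of_forall fun k => EReal.coe_nonpos.2 (hr k))
  have h2 : atTop.liminf (fun k => ((r k : ℝ) : EReal)) ≤ atTop.limsup (fun k => ((r k : ℝ) : EReal)) :=
    liminf_le_limsup
  have hl : atTop.liminf (fun k => ((r k : ℝ) : EReal)) = 0 := le_antisymm (h2.trans h1) h
  have hs : atTop.limsup (fun k => ((r k : ℝ) : EReal)) = 0 := le_antisymm h1 (h.trans h2)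
  have := tendsto_of_liminf_eq_limsup hl hs
  rw [show (0 : EReal) = ((0:ℝ) : EReal) by simp] at this
  exact EReal.tendsto_coe.1 this

noncomputable def sft (j : ℕ) (f : ℤ × ℤ → EReal) : ℤ × ℤ → EReal :=
  fun p => f (p.1 + j, p.2 + j)

lemma sft_meas (j : ℕ) : Measurable (sft j) :=
  measurable_pi_lambda _ (fun p => measurable_pi_apply _)

lemma sft_sft (j : ℕ) (f : ℤ × ℤ → EReal) : sft j (sft 1 f) = sft (j+1) f := by
  funext p; simp only [sft]; push_cast; ring_nf

def KSet : Set (ℤ × ℤ → EReal) :=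
  {f | (∀ p q : ℤ, p < q → f (p,q) ≤ 0) ∧
       (∀ p q r : ℤ, p < q → q < r → f (p,r) ≤ f (p,q) + f (q,r)) ∧
       (∀ m : ℕ, (0:EReal) ≤ atTop.liminf
          (fun k : ℕ => f ((m:ℤ), (m:ℤ)+(k:ℤ)+1) / (((k:ℝ)+1 : ℝ) : EReal)))}

lemma KSet_shape : KSet = {f | (∀ p q : ℤ, p < q → f (p,q) ≤ 0)} ∩
    ({f | (∀ p q r : ℤ, p < q → q < r → f (p,r) ≤ f (p,q) + f (q,r))} ∩
     {f | (∀ m : ℕ, (0:EReal) ≤ atTop.liminf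
          (fun k : ℕ => f ((m:ℤ), (m:ℤ)+(k:ℤ)+1) / (((k:ℝ)+1 : ℝ) : EReal)))}) := rfl

lemma measKSet : MeasurableSet KSet := by
  rw [KSet_shape]
  apply MeasurableSet.inter
  · have e : {f : ℤ × ℤ → EReal | ∀ p q : ℤ, p < q → f (p,q) ≤ 0}
        = ⋂ (p : ℤ) (q : ℤ), {f : ℤ × ℤ → EReal | p < q → f (p,q) ≤ 0} := by
      ext f; simp
    rw [e]
    refine MeasurableSet.iInter fun p => MeasurableSet.iInter fun q => ?_
    by_cases h : p < q
    · simp only [h, forall_true_left]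
      exact measurableSet_le (measurable_pi_apply _) measurable_const
    · simp [h]
  apply MeasurableSet.inter
  · have e : {f : ℤ × ℤ → EReal | ∀ p q r : ℤ, p < q → q < r → f (p,r) ≤ f (p,q) + f (q,r)}
        = ⋂ (p : ℤ) (q : ℤ) (r : ℤ),
          {f : ℤ × ℤ → EReal | p < q → q < r → f (p,r) ≤ f (p,q) + f (q,r)} := by
      ext f; simp
    rw [e]
    refine MeasurableSet.iInter fun p => MeasurableSet.iInter fun q =>
      MeasurableSet.iInter fun r => ?_
    by_cases h : p < q
    · by_cases h' : q < r
      · simp only [h, h', forall_true_left]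
        exact measurableSet_le (measurable_pi_apply _)
          (ereal_measurable_add (measurable_pi_apply _) (measurable_pi_apply _))
      · simp [h']
    · simp [h]
  · have e : {f : ℤ × ℤ → EReal | ∀ m : ℕ, (0:EReal) ≤ atTop.liminf
          (fun k : ℕ => f ((m:ℤ), (m:ℤ)+(k:ℤ)+1) / (((k:ℝ)+1 : ℝ) : EReal))}
        = ⋂ (m : ℕ), {f : ℤ × ℤ → EReal | (0:EReal) ≤ atTop.liminf
          (fun k : ℕ => f ((m:ℤ), (m:ℤ)+(k:ℤ)+1) / (((k:ℝ)+1 : ℝ) : EReal))} := by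
      ext f; simp
    rw [e]
    refine MeasurableSet.iInter fun m => ?_
    refine measurableSet_le measurable_const ?_
    refine Measurable.liminf fun k => ?_
    have hm : Monotone (fun x : EReal => x / (((k:ℝ)+1 : ℝ) : EReal)) :=
      fun _ _ hab => EReal.div_le_div_right_of_nonneg
        (by exact_mod_cast (by positivity : (0:ℝ) ≤ (k:ℝ)+1)) hab
    exact hm.measurable.comp (measurable_pi_apply _)

lemma sft_memKSet {f : ℤ × ℤ → EReal} (hf : f ∈ KSet) (j : ℕ) : sft j f ∈ KSet := by
  obtain ⟨h1, h2, h3⟩ := hf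
  refine ⟨fun p q hpq => h1 _ _ (by omega), fun p q r hpq hqr => h2 _ _ _ (by omega) (by omega),
    fun m => ?_⟩
  have := h3 (m + j)
  convert this using 3 with k
  simp only [sft]
  push_cast
  ring_nf

noncomputable def W (n : ℕ) (f : ℤ × ℤ → EReal) : ℝ := (max (f (0, (n:ℤ))) (-1)).toReal

lemma W_props {n : ℕ} {f : ℤ × ℤ → EReal} (h0 : f (0, (n:ℤ)) ≤ 0) :
    f (0, (n:ℤ)) ≤ ((W n f : ℝ) : EReal) ∧ W n f ≤ 0 ∧ -1 ≤ W n f := by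
  have hneg : ((-1:ℝ):EReal) = (-1 : EReal) := by rw [EReal.coe_neg, EReal.coe_one]
  set x := max (f (0, (n:ℤ))) (-1) with hx
  have hxle : x ≤ 0 := max_le h0 (by rw [← hneg]; exact_mod_cast (by norm_num : (-1:ℝ) ≤ 0))
  have hxge : ((-1 : ℝ) : EReal) ≤ x := by
    rw [hx, hneg]; exact le_max_right _ _
  have hxt : x ≠ ⊤ := fun h => by simp [h] at hxle
  have hxb : x ≠ ⊥ := fun h => by rw [h] at hxge; exact absurd hxge (EReal.bot_lt_coe _).not_ge
  have hcoe : ((x.toReal : ℝ) : EReal) = x := EReal.coe_toReal hxt hxb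
  refine ⟨?_, ?_, ?_⟩
  · rw [W, hcoe]; exact le_max_left _ _
  · have : ((W n f : ℝ) : EReal) ≤ ((0:ℝ) : EReal) := by rw [W, hcoe]; exact_mod_cast hxle
    exact_mod_cast this
  · have : ((-1 : ℝ) : EReal) ≤ ((W n f : ℝ) : EReal) := by rw [W, hcoe]; exact hxge
    exact_mod_cast this

lemma claim1 {n : ℕ} (hn : 1 ≤ n) {f : ℤ × ℤ → EReal} (hf : f ∈ KSet) :
    Tendsto (fun k : ℕ => (∑ j ∈ Finset.range (k+1), W n (sft (j*n) f)) / ((k:ℝ)+1))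
      atTop (nhds 0) := by
  obtain ⟨h1, h2, h3⟩ := hf
  have hcoord : ∀ j : ℕ, (sft (j*n) f) (0, (n:ℤ)) = f ((j*n : ℕ), (((j+1)*n : ℕ) : ℤ)) := by
    intro j
    simp only [sft]
    congr 1
    rw [Prod.mk.injEq]
    refine ⟨by simp, by push_cast; ring⟩
  have hWp : ∀ j : ℕ, (sft (j*n) f) (0, (n:ℤ)) ≤ ((W n (sft (j*n) f) : ℝ) : EReal) ∧
      W n (sft (j*n) f) ≤ 0 ∧ -1 ≤ W n (sft (j*n) f) := by
    intro j
    refine W_props ?_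
    rw [hcoord j]
    exact h1 _ _ (by push_cast; nlinarith [hn])
  set s : ℕ → ℝ := fun k => ∑ j ∈ Finset.range (k+1), W n (sft (j*n) f) with hs
  have chain : ∀ k : ℕ, f (0, (((k+1)*n : ℕ) : ℤ)) ≤ ((s k : ℝ) : EReal) := by
    intro k
    induction k with
    | zero =>
      have := (hWp 0).1
      rw [hcoord 0] at this
      simpa [hs] using this
    | succ k ih =>
      have hlt1 : (0:ℤ) < (((k+1)*n : ℕ) : ℤ) := by push_cast; positivity
      have hlt2 : ((((k+1))*n : ℕ) : ℤ) < (((k+2)*n : ℕ) : ℤ) := by push_cast; nlinarith [hn]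
      have step := h2 0 (((k+1)*n : ℕ) : ℤ) (((k+2)*n : ℕ) : ℤ) hlt1 hlt2
      have hco2 : f ((((k+1)*n : ℕ) : ℤ), (((k+2)*n : ℕ) : ℤ))
          = (sft ((k+1)*n) f) (0, (n:ℤ)) := by rw [hcoord (k+1)]
      rw [hco2] at step
      calc f (0, (((k+2)*n : ℕ) : ℤ))
          ≤ f (0, (((k+1)*n : ℕ) : ℤ)) + (sft ((k+1)*n) f) (0, (n:ℤ)) := step
        _ ≤ ((s k : ℝ) : EReal) + ((W n (sft ((k+1)*n) f) : ℝ) : EReal) :=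
            add_le_add ih (hWp (k+1)).1
        _ = ((s (k+1) : ℝ) : EReal) := by
            rw [← EReal.coe_add]
            congr 1
            rw [hs]
            simp [Finset.sum_range_succ]
  -- liminf along subsequence
  set u : ℕ → EReal := fun k => f (0, (0:ℤ)+(k:ℤ)+1) / (((k:ℝ)+1 : ℝ) : EReal) with hu
  set φ : ℕ → ℕ := fun k => (k+1)*n - 1 with hφdef
  have hkk : ∀ k : ℕ, k ≤ (k+1)*n - 1 := fun k => by
    have := Nat.le_mul_of_pos_right (k+1) (by omega : 0 < n); omega
  have hφ : Tendsto φ atTop atTop := tendsto_atTop_mono hkk tendsto_id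
  have hsub1 : atTop.liminf u ≤ atTop.liminf (u ∘ φ) := by
    have h' : atTop.liminf u ≤ (Filter.map φ atTop).liminf u := liminf_le_liminf_of_le hφ
    rwa [show (Filter.map φ atTop).liminf u = atTop.liminf (u ∘ φ) by
      simp only [Filter.liminf, Filter.map_map]] at h'
  have huφ : ∀ k, u (φ k) = f (0, (((k+1)*n : ℕ) : ℤ)) / (((((k+1)*n : ℕ) : ℝ)) : EReal) := by
    intro k
    have hφ1 : φ k + 1 = (k+1)*n := Nat.sub_add_cancel (by nlinarith [hn])
    have e1 : (0:ℤ) + (φ k : ℤ) + 1 = (((k+1)*n : ℕ) : ℤ) := by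
      rw [← hφ1]; push_cast; ring
    have e2 : ((φ k : ℝ) + 1) = (((k+1)*n : ℕ) : ℝ) := by
      rw [← hφ1]; push_cast; ring
    rw [hu]
    simp only [e1, e2]
  have key : (0:EReal) ≤ atTop.liminf
      (fun k => ((s k / (((k+1)*n : ℕ):ℝ) : ℝ) : EReal)) := by
    refine le_trans (le_trans (h3 0) hsub1) (liminf_le_liminf (Eventually.of_forall fun k => ?_))
    show u (φ k) ≤ _
    rw [huφ k]
    have hD : (0:ℝ) ≤ (((k+1)*n : ℕ) : ℝ) := by positivity
    calc f (0, (((k+1)*n : ℕ) : ℤ)) / (((((k+1)*n : ℕ) : ℝ)) : EReal)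
        ≤ ((s k : ℝ) : EReal) / (((((k+1)*n : ℕ) : ℝ)) : EReal) :=
          EReal.div_le_div_right_of_nonneg (by exact_mod_cast hD) (chain k)
      _ = ((s k / (((k+1)*n : ℕ):ℝ) : ℝ) : EReal) := (EReal.coe_div _ _).symm
  have hr0 : ∀ k, s k / (((k+1)*n : ℕ):ℝ) ≤ 0 := by
    intro k
    apply div_nonpos_of_nonpos_of_nonneg
    · exact Finset.sum_nonpos fun j _ => (hWp j).2.1
    · positivity
  have hrt := aux_tendsto_zero hr0 key
  have heq : (fun k : ℕ => s k / ((k:ℝ)+1))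
      = fun k => (s k / (((k+1)*n : ℕ):ℝ)) * n := by
    funext k
    have hn' : (n:ℝ) ≠ 0 := by positivity
    have hk' : ((k:ℝ)+1) ≠ 0 := by positivity
    have : (((k+1)*n : ℕ):ℝ) = ((k:ℝ)+1) * n := by push_cast; ring
    rw [this]
    field_simp
  rw [heq]
  have := hrt.mul_const (n:ℝ)
  simpa using this

lemma claim3 (ν : Measure (ℤ × ℤ → EReal)) [IsProbabilityMeasure ν]
    (hν : ∀ j : ℕ, ν.map (sft j) = ν) {n : ℕ} (hn : 1 ≤ n) :
    ∀ᵐ f ∂ν, f ∈ KSet → f (0, (n:ℤ)) = 0 := by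
  have hWm : Measurable (W n) :=
    ((measurable_pi_apply ((0:ℤ),(n:ℤ))).max measurable_const).ereal_toReal
  have hA := measKSet
  have hsubset : ∀ j : ℕ, KSet ⊆ sft j ⁻¹' KSet := fun j f hf => sft_memKSet hf j
  have hpre : ∀ j : ℕ, ν (sft j ⁻¹' KSet) = ν KSet := by
    intro j; rw [← Measure.map_apply (sft_meas j) hA, hν j]
  have hAe : ∀ j : ℕ, (sft j ⁻¹' KSet : Set _) =ᵐ[ν] KSet := by
    intro j
    have hd : ν ((sft j ⁻¹' KSet) \ KSet) = 0 := by
      rw [measure_diff (hsubset j) hA.nullMeasurableSet (measure_ne_top ν KSet), hpre j,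
        tsub_self]
    have hd2 : ν (KSet \ (sft j ⁻¹' KSet)) = 0 := by
      rw [Set.diff_eq_empty.mpr (hsubset j)]; exact measure_empty
    exact MeasureTheory.ae_eq_set.mpr ⟨hd, hd2⟩
  set g : ℕ → (ℤ × ℤ → EReal) → ℝ := fun j f => W n (sft (j*n) f) with hg
  have hgm : ∀ j, Measurable (g j) := fun j => hWm.comp (sft_meas _)
  have hgprop : ∀ j : ℕ, ∀ f ∈ KSet, g j f ≤ 0 ∧ -1 ≤ g j f := by
    intro j f hf
    have h0 : (sft (j*n) f) (0,(n:ℤ)) ≤ 0 :=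
      (sft_memKSet hf (j*n)).1 0 n (by exact_mod_cast hn)
    exact (W_props h0).2
  have hbd : ∀ j, ∀ᵐ f ∂(ν.restrict KSet), ‖g j f‖ ≤ 1 := by
    intro j
    rw [ae_restrict_iff' hA]
    refine Eventually.of_forall fun f hf => ?_
    obtain ⟨h1, h2⟩ := hgprop j f hf
    rw [Real.norm_eq_abs, abs_le]
    constructor <;> linarith
  have hint : ∀ j, IntegrableOn (g j) KSet ν := fun j =>
    Integrable.mono' (integrable_const 1) (hgm j).aestronglyMeasurable (hbd j)
  have hIj : ∀ j : ℕ, ∫ f in KSet, g j f ∂ν = ∫ f in KSet, W n f ∂ν := by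
    intro j
    rw [setIntegral_congr_set (hAe (j*n)).symm,
      ← MeasureTheory.setIntegral_map hA hWm.aestronglyMeasurable (sft_meas (j*n)).aemeasurable,
      hν (j*n)]
  set I := ∫ f in KSet, W n f ∂ν with hI
  have havg : ∀ k : ℕ, ∫ f in KSet, (∑ j ∈ Finset.range (k+1), g j f) / ((k:ℝ)+1) ∂ν = I := by
    intro k
    rw [integral_div, integral_finset_sum _ (fun j _ => hint j)]
    simp only [hIj]
    rw [Finset.sum_const, Finset.card_range, nsmul_eq_mul]
    have : ((k:ℝ)+1) ≠ 0 := by positivity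
    field_simp
    push_cast; ring
  have hDCT : Tendsto (fun k : ℕ =>
        ∫ f in KSet, (∑ j ∈ Finset.range (k+1), g j f) / ((k:ℝ)+1) ∂ν)
      atTop (nhds (∫ _ in KSet, (0:ℝ) ∂ν)) := by
    refine tendsto_integral_of_dominated_convergence (fun _ => 1) ?_ ?_ ?_ ?_
    · intro k
      exact ((Finset.measurable_sum _ (fun j _ => hgm j)).div_const _).aestronglyMeasurable
    · exact integrable_const 1
    · intro k
      rw [ae_restrict_iff' hA]
      refine Eventually.of_forall fun f hf => ?_
      have hab : |∑ j ∈ Finset.range (k+1), g j f| ≤ (k:ℝ)+1 := by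
        calc |∑ j ∈ Finset.range (k+1), g j f| ≤ ∑ j ∈ Finset.range (k+1), |g j f| :=
              Finset.abs_sum_le_sum_abs _ _
          _ ≤ ∑ _j ∈ Finset.range (k+1), (1:ℝ) := by
              refine Finset.sum_le_sum fun j _ => ?_
              obtain ⟨h1, h2⟩ := hgprop j f hf
              rw [abs_le]; constructor <;> linarith
          _ = (k:ℝ)+1 := by simp
      rw [Real.norm_eq_abs, abs_div, abs_of_pos (by positivity : (0:ℝ) < (k:ℝ)+1),
        div_le_one (by positivity : (0:ℝ) < (k:ℝ)+1)]
      exact hab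
    · rw [ae_restrict_iff' hA]
      exact Eventually.of_forall fun f hf => claim1 hn hf
  have hI0 : I = 0 := by
    have h1 : Tendsto (fun _ : ℕ => I) atTop (nhds I) := tendsto_const_nhds
    have h2 : Tendsto (fun _ : ℕ => I) atTop (nhds 0) := by
      have := hDCT
      simp only [havg, integral_zero] at this
      exact this
    exact tendsto_nhds_unique h1 h2
  have hWle : ∀ f ∈ KSet, W n f ≤ 0 := by
    intro f hf
    exact (W_props (hf.1 0 n (by exact_mod_cast hn))).2.1
  have hnegae : (fun f => -W n f) =ᵐ[ν.restrict KSet] 0 := by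
    rw [← integral_eq_zero_iff_of_nonneg_ae]
    · rw [integral_neg, ← hI, hI0, neg_zero]
    · show ∀ᵐ f ∂(ν.restrict KSet), (0 : (ℤ × ℤ → EReal) → ℝ) f ≤ -W n f
      rw [ae_restrict_iff' hA]
      refine Eventually.of_forall fun f hf => ?_
      simp only [Pi.zero_apply, neg_nonneg]
      exact hWle f hf
    · refine Integrable.mono' (integrable_const 1) (hWm.aestronglyMeasurable).neg ?_
      rw [ae_restrict_iff' hA]
      refine Eventually.of_forall fun f hf => ?_
      have h2 := (W_props (hf.1 0 n (by exact_mod_cast hn))).2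
      rw [Real.norm_eq_abs, abs_neg, abs_le]
      constructor <;> linarith [h2.1, h2.2]
  have hWzero : ∀ᵐ f ∂ν, f ∈ KSet → W n f = 0 := by
    have := (ae_restrict_iff' hA).1 hnegae
    filter_upwards [this] with f hf hfK
    have := hf hfK
    simpa using this
  filter_upwards [hWzero] with f hf hfK
  have hW0 := hf hfK
  have h0 : f (0, (n:ℤ)) ≤ 0 := hfK.1 0 n (by exact_mod_cast hn)
  set x := max (f (0, (n:ℤ))) (-1) with hx
  have hneg1 : ((-1:ℝ):EReal) = (-1 : EReal) := by rw [EReal.coe_neg, EReal.coe_one]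
  have hxle : x ≤ 0 := max_le h0 (by rw [← hneg1]; exact_mod_cast (by norm_num : (-1:ℝ) ≤ 0))
  have hxge : ((-1 : ℝ) : EReal) ≤ x := by rw [hx, hneg1]; exact le_max_right _ _
  have hxt : x ≠ ⊤ := fun h => by simp [h] at hxle
  have hxb : x ≠ ⊥ := fun h => by rw [h] at hxge; exact absurd hxge (EReal.bot_lt_coe _).not_ge
  have hxz : x = 0 := by
    have := EReal.coe_toReal hxt hxb
    rw [← this, show x.toReal = W n f from rfl, hW0]
    simp
  rcases max_cases (f (0, (n:ℤ))) (-1) with ⟨h, _⟩ | ⟨h, _⟩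
  · rw [← hx, hxz] at h; exact h.symm ▸ rfl
  · rw [← hx, hxz] at h
    exact absurd h.symm (by rw [← hneg1]; exact_mod_cast (by norm_num : (-1:ℝ) ≠ 0))

lemma cond3 (g : ℤ → ℤ → EReal)
    (hle0 : ∀ p q : ℤ, p < q → g p q ≤ 0)
    (hsub : ∀ p q r : ℤ, p < q → q < r → g p r ≤ g p q + g q r)
    (htd : Tendsto (fun k : ℕ => g 0 (k:ℤ) / (k : EReal)) atTop (nhds 0)) :
    ∀ m : ℕ, (0:EReal) ≤ atTop.liminf
      (fun k : ℕ => g (m:ℤ) ((m:ℤ)+(k:ℤ)+1) / (((k:ℝ)+1 : ℝ) : EReal)) := by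
  have hcast : ∀ k : ℕ, ((k : ℝ) : EReal) = (k : EReal) := fun k => by norm_cast
  have htop : ∀ p q : ℤ, p < q → g p q ≠ ⊤ := by
    intro p q hpq h
    have := hle0 p q hpq
    rw [h] at this
    exact absurd this (by simp)
  have hbot : ∀ q : ℤ, 1 ≤ q → g 0 q ≠ ⊥ := by
    intro q hq hbotq
    have hall : ∀ k : ℕ, q < (k:ℤ) → g 0 (k:ℤ) = ⊥ := by
      intro k hk
      have h := hsub 0 q (k:ℤ) (by omega) hk
      rw [hbotq, EReal.bot_add] at h
      exact le_bot_iff.1 h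
    have hev : (fun k : ℕ => g 0 (k:ℤ)/(k:EReal)) =ᶠ[atTop] fun _ => (⊥ : EReal) := by
      filter_upwards [eventually_ge_atTop (q.toNat + 1)] with k hk
      have hk' : q < (k:ℤ) := by omega
      rw [hall k hk', ← hcast k]
      have hkpos : (0:ℝ) < (k:ℝ) := by
        have h1 : 0 < k := by omega
        exact_mod_cast h1
      exact EReal.bot_div_of_pos_ne_top (by exact_mod_cast hkpos) (EReal.coe_ne_top _)
    have := tendsto_nhds_unique (htd.congr' hev) tendsto_const_nhds
    simp at this
  intro m
  suffices h : Tendsto (fun k : ℕ => g (m:ℤ) ((m:ℤ)+(k:ℤ)+1) / (((k:ℝ)+1 : ℝ) : EReal))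
      atTop (nhds 0) by
    rw [h.liminf_eq]
  -- reduce `htd` to a real statement
  set x : ℕ → ℝ := fun K => (g 0 (K:ℤ)).toReal with hxdef
  have hxc : ∀ K : ℕ, 1 ≤ K → g 0 (K:ℤ) = ((x K : ℝ) : EReal) := fun K hK =>
    (EReal.coe_toReal (htop 0 K (by exact_mod_cast hK)) (hbot K (by exact_mod_cast hK))).symm
  have hx : Tendsto (fun K : ℕ => x K/(K:ℝ)) atTop (nhds 0) := by
    have hev : (fun K : ℕ => g 0 (K:ℤ)/(K:EReal)) =ᶠ[atTop]
        fun K => ((x K/(K:ℝ) : ℝ) : EReal) := by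
      filter_upwards [eventually_ge_atTop 1] with K hK
      rw [hxc K hK, ← hcast K, ← EReal.coe_div]
    have h2 := htd.congr' hev
    rw [show (0 : EReal) = ((0:ℝ) : EReal) by simp] at h2
    exact EReal.tendsto_coe.1 h2
  cases m with
  | zero =>
    have hcomp := hx.comp (tendsto_add_atTop_nat 1)
    have hev : ∀ k : ℕ, g (0:ℤ) ((0:ℤ)+(k:ℤ)+1) / (((k:ℝ)+1 : ℝ) : EReal)
        = (((x (k+1)/((k+1:ℕ):ℝ)) : ℝ) : EReal) := by
      intro k
      have e1 : (0:ℤ)+(k:ℤ)+1 = ((k+1 : ℕ):ℤ) := by push_cast; ring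
      have e2 : ((k:ℝ)+1 : ℝ) = ((k+1:ℕ):ℝ) := by push_cast; ring
      rw [e1, e2, hxc (k+1) (by omega), ← EReal.coe_div]
    rw [show (0 : EReal) = ((0:ℝ) : EReal) by simp]
    refine Tendsto.congr (fun k => (hev k).symm) (EReal.tendsto_coe.2 ?_)
    exact hcomp
  | succ m₀ =>
    set m1 : ℕ := m₀ + 1 with hm1
    set M : ℤ := (m1 : ℤ) with hM
    have hM1 : 1 ≤ M := by omega
    have hcb : g 0 M ≠ ⊥ := hbot M hM1
    have hct : g 0 M ≠ ⊤ := htop 0 M (by omega)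
    set c : ℝ := (g 0 M).toReal with hcdef
    have hc : g 0 M = (c:EReal) := (EReal.coe_toReal hct hcb).symm
    have hyb : ∀ k : ℕ, g M (M+(k:ℤ)+1) ≠ ⊥ := by
      intro k hb
      have hs := hsub 0 M (M+(k:ℤ)+1) (by omega) (by omega)
      rw [hb, EReal.add_bot] at hs
      have : g 0 (M+(k:ℤ)+1) = ⊥ := le_bot_iff.1 hs
      have h2 : ((m1+k+1 : ℕ) : ℤ) = M+(k:ℤ)+1 := by push_cast; omega
      exact hbot (M+(k:ℤ)+1) (by omega) this
    have hyt : ∀ k : ℕ, g M (M+(k:ℤ)+1) ≠ ⊤ := fun k => htop _ _ (by omega)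
    set y : ℕ → ℝ := fun k => (g M (M+(k:ℤ)+1)).toReal with hydef
    have hyc : ∀ k : ℕ, g M (M+(k:ℤ)+1) = ((y k : ℝ) : EReal) := fun k =>
      (EReal.coe_toReal (hyt k) (hyb k)).symm
    have hyle : ∀ k, y k ≤ 0 := by
      intro k
      have := hle0 M (M+(k:ℤ)+1) (by omega)
      rw [hyc k] at this
      exact_mod_cast this
    have hineq : ∀ k : ℕ, x (m1+k+1) - c ≤ y k := by
      intro k
      have hKcast : ((m1+k+1 : ℕ) : ℤ) = M+(k:ℤ)+1 := by push_cast; omega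
      have hs := hsub 0 M (M+(k:ℤ)+1) (by omega) (by omega)
      rw [hc, hyc k, ← EReal.coe_add, ← hKcast, hxc (m1+k+1) (by omega)] at hs
      have := EReal.coe_le_coe_iff.1 hs
      linarith
    have hlow : ∀ k : ℕ, (x (m1+k+1) - c)/((k:ℝ)+1) ≤ y k/((k:ℝ)+1) := by
      intro k
      exact div_le_div_of_nonneg_right (hineq k) (by positivity)
    have h1 : Tendsto (fun k : ℕ => x (m1+k+1) / ((m1+k+1 : ℕ):ℝ)) atTop (nhds 0) := by
      have hφ : Tendsto (fun k : ℕ => m1+k+1) atTop atTop :=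
        tendsto_atTop_atTop.2 fun b => ⟨b, fun a ha => by omega⟩
      exact hx.comp hφ
    have hz : Tendsto (fun k : ℕ => 1/((k:ℝ)+1)) atTop (nhds 0) :=
      tendsto_one_div_add_atTop_nhds_zero_nat
    have h2 : Tendsto (fun k : ℕ => ((m1+k+1 : ℕ):ℝ)/((k:ℝ)+1)) atTop (nhds 1) := by
      have h2' : Tendsto (fun k : ℕ => 1 + (m1:ℝ) * (1/((k:ℝ)+1))) atTop
          (nhds (1 + (m1:ℝ)*0)) := tendsto_const_nhds.add (hz.const_mul _)
      rw [show (1:ℝ) + (m1:ℝ)*0 = 1 by ring] at h2'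
      refine h2'.congr fun k => ?_
      have hk : ((k:ℝ)+1) ≠ 0 := by positivity
      push_cast
      field_simp
      try ring
    have h4 : Tendsto (fun k : ℕ => c/((k:ℝ)+1)) atTop (nhds 0) := by
      have := hz.const_mul c
      rw [mul_zero] at this
      refine this.congr fun k => ?_
      field_simp
    have hL : Tendsto (fun k : ℕ => (x (m1+k+1) - c)/((k:ℝ)+1)) atTop (nhds 0) := by
      have h3 := (h1.mul h2).sub h4
      rw [show (0:ℝ)*1 - 0 = 0 by ring] at h3
      refine h3.congr fun k => ?_
      have hK : ((m1+k+1 : ℕ):ℝ) ≠ 0 := by positivity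
      have hk : ((k:ℝ)+1) ≠ 0 := by positivity
      field_simp
      try ring
    have hy0 : Tendsto (fun k : ℕ => y k/((k:ℝ)+1)) atTop (nhds 0) := by
      refine tendsto_of_tendsto_of_tendsto_of_le_of_le hL tendsto_const_nhds hlow ?_
      intro k
      exact div_nonpos_iff.2 (Or.inr ⟨hyle k, by positivity⟩)
    rw [show (0 : EReal) = ((0:ℝ) : EReal) by simp]
    refine Tendsto.congr (fun k => ?_) (EReal.tendsto_coe.2 hy0)
    rw [EReal.coe_div, ← hyc k]

theorem stmt_11 {Ω : Type*} [MeasurableSpace Ω] (μ : Measure Ω) [IsProbabilityMeasure μ]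
    (X : ℤ → ℤ → Ω → EReal)
    (hmeas : ∀ m n : ℤ, Measurable (X m n))
    -- values in [-∞, 0]
    (hle0 : ∀ m n : ℤ, m < n → ∀ ω, X m n ω ≤ 0)
    -- subadditivity
    (hsub : ∀ p q r : ℤ, p < q → q < r → ∀ ω, X p r ω ≤ X p q ω + X q r ω)
    -- stationarity under the shift (m,n) ↦ (m+1, n+1): the joint laws coincide
    (hstat : Measure.map (fun ω => fun p : ℤ × ℤ => X p.1 p.2 ω) μ =
             Measure.map (fun ω => fun p : ℤ × ℤ => X (p.1 + 1) (p.2 + 1) ω) μ)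
    -- ξ is the a.s. limit of X_{0,n}/n (Kingman's subadditive ergodic theorem)
    (ξ : Ω → EReal)
    (hξ : ∀ᵐ ω ∂μ, Tendsto (fun n : ℕ => X 0 (n : ℤ) ω / (n : EReal)) atTop (nhds (ξ ω)))
    -- the compositions are not all trivially non-contracting
    (hnull : μ (⋂ n : ℕ, {ω | X 0 ((n : ℤ) + 1) ω = 0}) = 0) :
    ∀ᵐ ω ∂μ, ξ ω < 0 := by
    classical
  set Φ : Ω → (ℤ × ℤ → EReal) := fun ω => fun p : ℤ × ℤ => X p.1 p.2 ω with hΦdef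
  have hΦ : Measurable Φ := measurable_pi_lambda _ (fun p => hmeas p.1 p.2)
  set ν : Measure (ℤ × ℤ → EReal) := μ.map Φ with hνdef
  have hprob : IsProbabilityMeasure ν := Measure.isProbabilityMeasure_map hΦ.aemeasurable
  have hν1 : ν.map (sft 1) = ν := by
    rw [hνdef, Measure.map_map (sft_meas 1) hΦ]
    have he : (sft 1) ∘ Φ = fun ω => fun p : ℤ × ℤ => X (p.1 + 1) (p.2 + 1) ω := by
      funext ω p
      simp only [Function.comp_apply, sft, hΦdef]
      norm_num
    rw [he, ← hstat]
  have hνj : ∀ j : ℕ, ν.map (sft j) = ν := by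
    intro j
    induction j with
    | zero =>
      have h0 : sft 0 = id := by funext f p; simp [sft]
      rw [h0, Measure.map_id]
    | succ j ih =>
      have hc : sft (j+1) = sft j ∘ sft 1 := by funext f; exact (sft_sft j f).symm
      rw [hc, ← Measure.map_map (sft_meas j) (sft_meas 1), hν1, ih]
  have hnulln : ∀ n : ℕ, μ {ω | Φ ω ∈ KSet ∧ X 0 ((n:ℤ)+1) ω ≠ 0} = 0 := by
    intro n
    have h3 := claim3 ν hνj (n := n+1) (by omega)
    set N : Set (ℤ × ℤ → EReal) := KSet ∩ {f | f (0, ((n+1:ℕ):ℤ)) ≠ 0} with hNdef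
    have hco : {f : ℤ × ℤ → EReal | f (0, ((n+1:ℕ):ℤ)) ≠ 0}
        = ((fun f : ℤ × ℤ → EReal => f (0, ((n+1:ℕ):ℤ))) ⁻¹' {0})ᶜ := by
      ext f; simp
    have hNm : MeasurableSet N := by
      refine measKSet.inter ?_
      rw [hco]
      exact ((measurable_pi_apply ((0:ℤ), ((n+1:ℕ):ℤ))) (measurableSet_singleton (0:EReal))).compl
    have hN0 : ν N = 0 := by
      have : ∀ᵐ f ∂ν, f ∉ N := by
        filter_upwards [h3] with f hf hfN
        exact hfN.2 (hf hfN.1)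
      exact (MeasureTheory.measure_eq_zero_iff_ae_notMem (μ := ν)).2 this
    have hpre : μ (Φ ⁻¹' N) = 0 := by
      rw [← Measure.map_apply hΦ hNm, ← hνdef]
      exact hN0
    have hseteq : {ω | Φ ω ∈ KSet ∧ X 0 ((n:ℤ)+1) ω ≠ 0} = Φ ⁻¹' N := by
      ext ω
      have he : ((n+1:ℕ):ℤ) = (n:ℤ)+1 := by push_cast; ring
      simp only [hNdef, Set.mem_setOf_eq, Set.mem_preimage, Set.mem_inter_iff, he]
      exact Iff.rfl
    rw [hseteq]
    exact hpre
  have hae1 : ∀ᵐ ω ∂μ, ∀ n : ℕ, ¬(Φ ω ∈ KSet ∧ X 0 ((n:ℤ)+1) ω ≠ 0) := by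
    rw [ae_all_iff]
    intro n
    have := hnulln n
    rw [ae_iff]
    simpa using this
  have hB : ∀ᵐ ω ∂μ, ω ∉ ⋂ n : ℕ, {ω | X 0 ((n:ℤ)+1) ω = 0} :=
    (MeasureTheory.measure_eq_zero_iff_ae_notMem (μ := μ)).1 hnull
  filter_upwards [hξ, hae1, hB] with ω htd hA hNB
  have hle : ξ ω ≤ 0 := by
    refine le_of_tendsto htd ?_
    filter_upwards [eventually_ge_atTop 1] with k hk
    refine EReal.div_nonpos_of_nonpos_of_nonneg (hle0 0 k (by exact_mod_cast hk) ω) ?_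
    rw [show ((k:ℕ) : EReal) = (((k:ℕ):ℝ) : EReal) by norm_cast]
    exact_mod_cast (by positivity : (0:ℝ) ≤ (k:ℝ))
  refine lt_of_le_of_ne hle ?_
  intro h0
  rw [h0] at htd
  have hKS : Φ ω ∈ KSet :=
    ⟨fun p q hpq => hle0 p q hpq ω, fun p q r h h' => hsub p q r h h' ω,
      cond3 (fun a b => X a b ω) (fun p q h => hle0 p q h ω)
        (fun p q r h h' => hsub p q r h h' ω) htd⟩
  have hXn : ∀ n : ℕ, X 0 ((n:ℤ)+1) ω = 0 := by
    intro n
    by_contra hne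
    exact hA n ⟨hKS, hne⟩
  exact hNB (Set.mem_iInter.2 fun n => hXn n)
end
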